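/- arXiv:1708.01672 — 6 statements merged into one kernel-verified Lean document; each statement's English description precedes it below -/
import Mathlib

section
/- Let d ≥ 2 and define M₁(t) = ∑_{i=0}^{d-1} C(d-1,i)² t^{2i}, A₁(t) = ∑_{i=0}^{d-1} i² C(d-1,i)² t^{2(i-1)}, B₁(t) = ∑_{i=0}^{d-1} i C(d-1,i)² t^{2i-1}. Then for all real t, A₁(t)·(t² − 1) + M₁(t)·(d−1)² − 2(d−1)·t·B₁(t) = 0. -/
open Finset

lemma key_choose (n i : ℕ) :
    ((n : ℝ) - i) * (n.choose i : ℝ) = ((i : ℝ) + 1) * (n.choose (i + 1) : ℝ) := by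
  rcases le_or_gt i n with h | h
  · have h2 := Nat.choose_succ_right_eq n i
    have h3 := congrArg (Nat.cast : ℕ → ℝ) h2
    push_cast [Nat.cast_sub h] at h3
    linarith
  · rw [Nat.choose_eq_zero_of_lt h, Nat.choose_eq_zero_of_lt (by omega)]
    push_cast; ring

theorem stmt_7 (d : ℕ) (hd : 2 ≤ d) (t : ℝ) :
    (∑ i ∈ Finset.range d, (i : ℝ) ^ 2 * (Nat.choose (d - 1) i : ℝ) ^ 2 * t ^ (2 * (i - 1))) * (t ^ 2 - 1)
    + (∑ i ∈ Finset.range d, (Nat.choose (d - 1) i : ℝ) ^ 2 * t ^ (2 * i)) * ((d : ℝ) - 1) ^ 2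
    - 2 * ((d : ℝ) - 1) * t * (∑ i ∈ Finset.range d, (i : ℝ) * (Nat.choose (d - 1) i : ℝ) ^ 2 * t ^ (2 * i - 1))
    = 0 := by
  obtain ⟨n, rfl⟩ : ∃ n, d = n + 1 := ⟨d - 1, by omega⟩
  simp only [Nat.add_sub_cancel]
  set F : ℕ → ℝ := fun i => ((n : ℝ) - i) ^ 2 * (n.choose i : ℝ) ^ 2 * t ^ (2 * i) with hF
  set G : ℕ → ℝ := fun i => (i : ℝ) ^ 2 * (n.choose i : ℝ) ^ 2 * t ^ (2 * (i - 1)) with hG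
  have hFG : ∀ i, F i = G (i + 1) := by
    intro i
    have hc : ((n : ℝ) - i) ^ 2 * (n.choose i : ℝ) ^ 2
        = ((i : ℝ) + 1) ^ 2 * (n.choose (i + 1) : ℝ) ^ 2 := by
      calc ((n : ℝ) - i) ^ 2 * (n.choose i : ℝ) ^ 2
          = (((n : ℝ) - i) * (n.choose i : ℝ)) ^ 2 := by ring
        _ = (((i : ℝ) + 1) * (n.choose (i + 1) : ℝ)) ^ 2 := by rw [key_choose]
        _ = ((i : ℝ) + 1) ^ 2 * (n.choose (i + 1) : ℝ) ^ 2 := by ring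
    simp only [hF, hG, Nat.add_sub_cancel, hc]
    push_cast
    ring
  have shift : ∑ i ∈ Finset.range (n + 1), F i = ∑ i ∈ Finset.range (n + 1), G i := by
    have h1 : ∑ i ∈ Finset.range (n + 1), F i = ∑ i ∈ Finset.range (n + 1), G (i + 1) :=
      Finset.sum_congr rfl (fun i _ => hFG i)
    have h2 : ∑ i ∈ Finset.range (n + 1), G (i + 1)
        = ∑ i ∈ Finset.range n, G (i + 1) + G (n + 1) := Finset.sum_range_succ _ n
    have h3 : ∑ i ∈ Finset.range (n + 1), G i
        = ∑ i ∈ Finset.range n, G (i + 1) + G 0 := Finset.sum_range_succ' _ n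
    have hG0 : G 0 = 0 := by simp [hG]
    have hGn : G (n + 1) = 0 := by
      simp [hG, Nat.choose_eq_zero_of_lt (Nat.lt_succ_self n)]
    rw [h1, h2, h3, hG0, hGn]
  calc (∑ i ∈ Finset.range (n + 1), (i : ℝ) ^ 2 * (n.choose i : ℝ) ^ 2 * t ^ (2 * (i - 1))) * (t ^ 2 - 1)
      + (∑ i ∈ Finset.range (n + 1), (n.choose i : ℝ) ^ 2 * t ^ (2 * i)) * (((n + 1 : ℕ) : ℝ) - 1) ^ 2
      - 2 * (((n + 1 : ℕ) : ℝ) - 1) * t * (∑ i ∈ Finset.range (n + 1), (i : ℝ) * (n.choose i : ℝ) ^ 2 * t ^ (2 * i - 1))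
      = ∑ i ∈ Finset.range (n + 1),
        ((i : ℝ) ^ 2 * (n.choose i : ℝ) ^ 2 * t ^ (2 * (i - 1)) * (t ^ 2 - 1)
          + (n.choose i : ℝ) ^ 2 * t ^ (2 * i) * (((n + 1 : ℕ) : ℝ) - 1) ^ 2
          - 2 * (((n + 1 : ℕ) : ℝ) - 1) * t * ((i : ℝ) * (n.choose i : ℝ) ^ 2 * t ^ (2 * i - 1))) := by
        rw [Finset.sum_mul, Finset.sum_mul, Finset.mul_sum, ← Finset.sum_add_distrib,
          ← Finset.sum_sub_distrib]
    _ = ∑ i ∈ Finset.range (n + 1), (F i - G i) := by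
        refine Finset.sum_congr rfl (fun i _ => ?_)
        rcases i with _ | j
        · simp only [hF, hG]
          push_cast
          ring
        · simp only [hF, hG, Nat.add_sub_cancel]
          have e1 : 2 * (j + 1) - 1 = 2 * j + 1 := by omega
          have e2 : 2 * (j + 1) = 2 * j + 2 := by omega
          rw [e1, e2]
          push_cast
          ring
    _ = (∑ i ∈ Finset.range (n + 1), F i) - ∑ i ∈ Finset.range (n + 1), G i :=
        Finset.sum_sub_distrib _ _
    _ = 0 := by rw [shift, sub_self]
end

section
/- For d ≥ 2 and x > 1, the Legendre polynomials satisfy the limit lim_{d→∞} P_d(x)/P_{d+1}(x) = x − √(x² − 1). -/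
noncomputable def legendre : ℕ → ℝ → ℝ
  | 0 => fun _ => 1
  | 1 => fun x => x
  | (n + 2) => fun x =>
      ((2 * (n : ℝ) + 3) * x * legendre (n + 1) x - ((n : ℝ) + 1) * legendre n x) / ((n : ℝ) + 2)

lemma legendre_rec (n : ℕ) (x : ℝ) :
    legendre (n + 2) x =
      ((2 * (n : ℝ) + 3) * x * legendre (n + 1) x - ((n : ℝ) + 1) * legendre n x) / ((n : ℝ) + 2) :=
  rfl

lemma legendre_pos_aux {x : ℝ} (hx : 1 < x) :
    ∀ d : ℕ, 0 < legendre d x ∧ x * legendre d x ≤ legendre (d + 1) x := by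
  have hx0 : (0:ℝ) < x := lt_trans one_pos hx
  intro d
  induction d with
  | zero =>
    refine ⟨by simp [legendre], ?_⟩
    simp [legendre]
  | succ n ih =>
    obtain ⟨h1, h2⟩ := ih
    have hp1 : 0 < legendre (n + 1) x := lt_of_lt_of_le (by positivity) h2
    refine ⟨hp1, ?_⟩
    rw [legendre_rec, le_div_iff₀ (by positivity)]
    have hn : (0:ℝ) ≤ (n:ℝ) := Nat.cast_nonneg n
    have key : legendre n x ≤ x * legendre (n + 1) x := by
      nlinarith [mul_le_mul_of_nonneg_left h2 hx0.le]
    have key2 := mul_le_mul_of_nonneg_left key (by positivity : (0:ℝ) ≤ (n:ℝ) + 1)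
    linarith

set_option maxHeartbeats 1000000 in
theorem stmt_9 (x : ℝ) (hx : 1 < x) :
    Filter.Tendsto (fun d : ℕ => legendre d x / legendre (d + 1) x)
      Filter.atTop (nhds (x - Real.sqrt (x ^ 2 - 1))) := by
  have hx0 : (0:ℝ) < x := lt_trans one_pos hx
  obtain ⟨s, hs_def⟩ : ∃ s : ℝ, s = Real.sqrt (x ^ 2 - 1) := ⟨_, rfl⟩
  rw [← hs_def]
  have hx21 : (0:ℝ) < x ^ 2 - 1 := by nlinarith
  have hs0 : 0 < s := hs_def ▸ Real.sqrt_pos.mpr hx21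
  have hs2 : s ^ 2 = x ^ 2 - 1 := by rw [hs_def]; exact Real.sq_sqrt hx21.le
  obtain ⟨L, hL_def⟩ : ∃ L : ℝ, L = x - s := ⟨_, rfl⟩
  rw [← hL_def]
  have hsx : s < x := by nlinarith
  have hL0 : 0 < L := by rw [hL_def]; linarith
  have hxL : x * L < 1 := by
    have h : 0 < s * (x - s) := mul_pos hs0 (by linarith)
    nlinarith [hL_def]
  have hL2 : L ^ 2 = 2 * x * L - 1 := by
    rw [hL_def]; linear_combination hs2
  obtain ⟨r, hr_def⟩ : ∃ r : ℕ → ℝ, r = fun d => legendre d x / legendre (d + 1) x := ⟨_, rfl⟩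
  rw [← hr_def]
  have hr_app : ∀ d : ℕ, r d = legendre d x / legendre (d + 1) x := fun d => by rw [hr_def]
  have hP : ∀ d, 0 < legendre d x := fun d => (legendre_pos_aux hx d).1
  have hPx : ∀ d, x * legendre d x ≤ legendre (d + 1) x := fun d => (legendre_pos_aux hx d).2
  have hr_pos : ∀ d, 0 < r d := fun d => (hr_app d) ▸ div_pos (hP d) (hP (d + 1))
  have hr_ub : ∀ d, r d ≤ 1 / x := by
    intro d
    rw [hr_app d, div_le_div_iff₀ (hP (d + 1)) hx0]
    nlinarith [hPx d]
  have hD_lb : ∀ d : ℕ, ((d:ℝ) + 1) * x ≤ (2 * (d:ℝ) + 3) * x - ((d:ℝ) + 1) * r d := by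
    intro d
    have h1 := hr_ub d
    have hn : (0:ℝ) ≤ (d:ℝ) := Nat.cast_nonneg d
    have h2 : ((d:ℝ) + 1) * r d ≤ ((d:ℝ) + 1) * (1 / x) := by
      apply mul_le_mul_of_nonneg_left h1 (by linarith)
    have h3 : ((d:ℝ) + 1) * (1 / x) ≤ ((d:ℝ) + 2) * x := by
      rw [mul_one_div, div_le_iff₀ hx0]
      nlinarith
    nlinarith
  have hD_pos : ∀ d : ℕ, 0 < (2 * (d:ℝ) + 3) * x - ((d:ℝ) + 1) * r d := by
    intro d
    have := hD_lb d
    have hn : (0:ℝ) ≤ (d:ℝ) := Nat.cast_nonneg d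
    nlinarith
  have hrec : ∀ d : ℕ, r (d + 1) = ((d:ℝ) + 2) / ((2 * (d:ℝ) + 3) * x - ((d:ℝ) + 1) * r d) := by
    intro d
    have hP1 := hP (d + 1)
    have hP2 := hP (d + 2)
    have hD := hD_pos d
    have h2 : ((d:ℝ) + 2) * legendre (d + 2) x
        = (2 * (d:ℝ) + 3) * x * legendre (d + 1) x - ((d:ℝ) + 1) * legendre d x := by
      rw [legendre_rec]
      field_simp
    have hrd : r d * legendre (d + 1) x = legendre d x := by
      rw [hr_app d]; exact div_mul_cancel₀ _ hP1.ne'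
    rw [hr_app (d + 1)]
    rw [div_eq_div_iff (hP (d + 1 + 1)).ne' hD.ne']
    have : legendre (d + 1 + 1) x = legendre (d + 2) x := rfl
    rw [this]
    linear_combination -h2 - ((d:ℝ) + 1) * hrd
  have hrL : ∀ d, L < r d := by
    intro d
    induction d with
    | zero =>
      have h0 : r 0 = 1 / x := by rw [hr_app]; simp [legendre]
      rw [h0, lt_div_iff₀ hx0]
      linarith [hxL]
    | succ n ih =>
      rw [hrec n, lt_div_iff₀ (hD_pos n)]
      have hn : (0:ℝ) ≤ (n:ℝ) := Nat.cast_nonneg n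
      nlinarith [mul_pos (mul_pos (by linarith : (0:ℝ) < (n:ℝ) + 1) hL0)
        (sub_pos.mpr ih), hL2, hxL]
  obtain ⟨q, hq_def⟩ : ∃ q : ℝ, q = L * x / (2 * x ^ 2 - 1) := ⟨_, rfl⟩
  obtain ⟨K, hK_def⟩ : ∃ K : ℝ, K = (1 - x * L) / x := ⟨_, rfl⟩
  have h2x21 : (1:ℝ) < 2 * x ^ 2 - 1 := by nlinarith
  have hq0 : 0 < q := by
    rw [hq_def]; exact div_pos (mul_pos hL0 hx0) (by linarith)
  have hq1 : q < 1 := by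
    rw [hq_def, div_lt_one (by linarith)]
    nlinarith
  have hK0 : 0 < K := by rw [hK_def]; exact div_pos (by linarith) hx0
  -- contraction step
  have hstep : ∀ d : ℕ, r (d + 1) - L ≤ q * (r d - L) + K / ((d:ℝ) + 1) := by
    intro d
    have hn : (0:ℝ) ≤ (d:ℝ) := Nat.cast_nonneg d
    have hd1 : (0:ℝ) < (d:ℝ) + 1 := by linarith
    obtain ⟨D, hDdef⟩ : ∃ D : ℝ, D = (2 * (d:ℝ) + 3) * x - ((d:ℝ) + 1) * r d := ⟨_, rfl⟩
    have hD : 0 < D := hDdef ▸ hD_pos d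
    have he : 0 < r d - L := sub_pos.mpr (hrL d)
    have heq : r (d + 1) - L = ((1 - x * L) + ((d:ℝ) + 1) * L * (r d - L)) / D := by
      rw [hrec d, ← hDdef, eq_div_iff hD.ne', sub_mul, div_mul_cancel₀ _ hD.ne', hDdef]
      linear_combination ((d:ℝ) + 1) * hL2
    have h2xr : x ≤ 2 * x - r d := by
      have h1 := hr_ub d
      have h2 : (1:ℝ) / x ≤ x := by rw [div_le_iff₀ hx0]; nlinarith
      linarith
    have hC2 : ((d:ℝ) + 1) * (2 * x - r d) ≤ D := by
      have h : D = ((d:ℝ) + 1) * (2 * x - r d) + x := by rw [hDdef]; ring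
      linarith
    have hC2pos : 0 < ((d:ℝ) + 1) * (2 * x - r d) := mul_pos hd1 (by linarith)
    have hC1 : ((d:ℝ) + 1) * x ≤ D := hDdef ▸ hD_lb d
    have hC1pos : 0 < ((d:ℝ) + 1) * x := by positivity
    rw [heq]
    have hsplit : ((1 - x * L) + ((d:ℝ) + 1) * L * (r d - L)) / D
        = (1 - x * L) / D + (((d:ℝ) + 1) * L * (r d - L)) / D := by ring
    rw [hsplit]
    have hb1 : (1 - x * L) / D ≤ K / ((d:ℝ) + 1) := by
      calc (1 - x * L) / D ≤ (1 - x * L) / (((d:ℝ) + 1) * x) :=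
            div_le_div_of_nonneg_left (by linarith) hC1pos hC1
        _ = K / ((d:ℝ) + 1) := by rw [hK_def, div_div]; ring_nf
    have hb2 : (((d:ℝ) + 1) * L * (r d - L)) / D ≤ q * (r d - L) := by
      have hx2r : 0 < 2 * x - r d := by linarith
      have hx2r' : 0 < 2 * x - 1 / x := by
        have hh : (1:ℝ) / x < x := by rw [div_lt_iff₀ hx0]; nlinarith
        linarith
      have h1 : (((d:ℝ) + 1) * L * (r d - L)) / D
          ≤ (((d:ℝ) + 1) * L * (r d - L)) / (((d:ℝ) + 1) * (2 * x - r d)) :=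
        div_le_div_of_nonneg_left (mul_nonneg (mul_nonneg hd1.le hL0.le) he.le) hC2pos hC2
      have h2 : (((d:ℝ) + 1) * L * (r d - L)) / (((d:ℝ) + 1) * (2 * x - r d))
          = L * (r d - L) / (2 * x - r d) := by
        rw [mul_assoc, mul_div_mul_left _ _ hd1.ne']
      have h3 : L * (r d - L) / (2 * x - r d) ≤ L * (r d - L) / (2 * x - 1 / x) := by
        apply div_le_div_of_nonneg_left (mul_nonneg hL0.le he.le) hx2r'
        linarith [hr_ub d]
      have h4 : L * (r d - L) / (2 * x - 1 / x) = q * (r d - L) := by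
        have key : 2 * x - 1 / x = (2 * x ^ 2 - 1) / x := by field_simp
        rw [hq_def, key, div_div_eq_mul_div]
        ring
      calc (((d:ℝ) + 1) * L * (r d - L)) / D
          ≤ L * (r d - L) / (2 * x - r d) := by rw [← h2]; exact h1
        _ ≤ L * (r d - L) / (2 * x - 1 / x) := h3
        _ = q * (r d - L) := h4
    linarith
  -- epsilon argument
  rw [Metric.tendsto_atTop]
  intro ε hε
  obtain ⟨c, hc_def⟩ : ∃ c : ℝ, c = (1 - q) * ε / 2 := ⟨_, rfl⟩
  have hc0 : 0 < c := by
    rw [hc_def]; exact div_pos (mul_pos (by linarith) hε) two_pos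
  obtain ⟨N₁, hN₁⟩ := exists_nat_ge (K / c)
  have hKc : ∀ m : ℕ, K / ((N₁:ℝ) + (m:ℝ) + 1) ≤ c := by
    intro m
    have hm : (0:ℝ) ≤ (m:ℝ) := Nat.cast_nonneg m
    have hNn : (0:ℝ) ≤ (N₁:ℝ) := Nat.cast_nonneg N₁
    rw [div_le_iff₀ (by linarith)]
    rw [div_le_iff₀ hc0] at hN₁
    nlinarith
  have hind : ∀ m : ℕ, r (N₁ + m) - L ≤ q ^ m * (1 / x) + ε / 2 := by
    intro m
    induction m with
    | zero =>
      simp only [Nat.add_zero, pow_zero, one_mul]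
      have := hr_ub N₁
      linarith
    | succ m ih =>
      have h1 := hstep (N₁ + m)
      have hcast : ((N₁ + m : ℕ) : ℝ) = (N₁:ℝ) + (m:ℝ) := by push_cast; ring
      rw [hcast] at h1
      have h2 := hKc m
      have h3 : q * (r (N₁ + m) - L) ≤ q * (q ^ m * (1 / x) + ε / 2) :=
        mul_le_mul_of_nonneg_left ih hq0.le
      have h4 : q * (q ^ m * (1 / x) + ε / 2) = q ^ (m + 1) * (1 / x) + q * (ε / 2) := by
        rw [pow_succ]; ring
      have h5 : r (N₁ + (m + 1)) = r (N₁ + m + 1) := by rw [Nat.add_succ]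
      rw [h5]
      have hqe : q * (ε / 2) + c ≤ ε / 2 := by
        rw [hc_def]; nlinarith
      linarith
  have hεx : 0 < ε * x / 2 := by positivity
  obtain ⟨M, hM⟩ := exists_pow_lt_of_lt_one hεx hq1
  refine ⟨N₁ + M, fun n hn => ?_⟩
  have hmN : N₁ ≤ n := le_trans (Nat.le_add_right N₁ M) hn
  have hn_eq : n = N₁ + (n - N₁) := (Nat.add_sub_cancel' hmN).symm
  have hMm : M ≤ n - N₁ := by omega
  have h1 : r n - L ≤ q ^ (n - N₁) * (1 / x) + ε / 2 := by
    have := hind (n - N₁)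
    rwa [← hn_eq] at this
  have h2 : q ^ (n - N₁) ≤ q ^ M := pow_le_pow_of_le_one hq0.le hq1.le hMm
  have h3 : q ^ M * (1 / x) < ε / 2 := by
    rw [mul_one_div, div_lt_iff₀ hx0]
    nlinarith
  have h4 : q ^ (n - N₁) * (1 / x) ≤ q ^ M * (1 / x) :=
    mul_le_mul_of_nonneg_right h2 (by positivity)
  have h5 : r n - L < ε := by linarith
  have h6 : 0 < r n - L := sub_pos.mpr (hrL n)
  rw [Real.dist_eq, abs_of_pos h6]
  exact h5
end

section
/- For 0 < t < 1, setting x = (1+t²)/(1−t²), the Legendre polynomials satisfy (1−t)² ≤ (1−t²)·P_d(x)/P_{d+1}(x) ≤ 1+t² for every d ≥ 0. -/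
lemma legendre_key (x z : ℝ) (hz : 1 < z) (hxz : 2 * x * z = z ^ 2 + 1) :
    ∀ n : ℕ, 0 < legendre n x ∧ legendre n x ≤ legendre (n + 1) x ∧
      legendre (n + 1) x ≤ z * legendre n x := by
  have hz0 : 0 < z := by linarith
  have hx1 : 1 ≤ x := by nlinarith [sq_nonneg (z - 1)]
  intro n
  induction n with
  | zero =>
    refine ⟨by norm_num [legendre], ?_, ?_⟩
    · simp only [legendre]; linarith
    · simp only [legendre]; nlinarith [sq_nonneg (z - 1)]
  | succ n ih =>
    obtain ⟨hpos, hle, hzle⟩ := ih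
    have hpos1 : 0 < legendre (n + 1) x := lt_of_lt_of_le hpos hle
    have hn2 : (0:ℝ) < (n : ℝ) + 2 := by positivity
    have hrec : legendre (n + 2) x =
        ((2 * (n : ℝ) + 3) * x * legendre (n + 1) x - ((n : ℝ) + 1) * legendre n x)
          / ((n : ℝ) + 2) := rfl
    refine ⟨hpos1, ?_, ?_⟩
    · rw [hrec, le_div_iff₀ hn2]
      nlinarith [mul_le_mul_of_nonneg_left hle (by positivity : (0:ℝ) ≤ (n:ℝ) + 1),
        mul_le_mul_of_nonneg_left hpos1.le (by nlinarith : (0:ℝ) ≤ (2 * (n:ℝ) + 3) * (x - 1))]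
    · rw [hrec, div_le_iff₀ hn2]
      -- need (2n+3) x P_{n+1} - (n+1) P_n ≤ (n+2) z P_{n+1}
      -- from z * P_{n+1} ≤ z^2 * P_n (mult hzle by z) and 2xz = z^2+1
      have h2 : 0 < z ^ 2 - 1 := by nlinarith
      have e : (2 * (n:ℝ) + 3) * x * legendre (n + 1) x * (2 * z)
          = (2 * (n:ℝ) + 3) * (z ^ 2 + 1) * legendre (n + 1) x := by
        linear_combination ((2 * (n:ℝ) + 3) * legendre (n + 1) x) * hxz
      have h3 : ((2 * (n:ℝ) + 3) * x * legendre (n + 1) x - ((n:ℝ) + 1) * legendre n x) * (2 * z)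
          ≤ ((n:ℝ) + 2) * (z * legendre (n + 1) x) * (2 * z) := by
        nlinarith [mul_le_mul_of_nonneg_left hzle (show (0:ℝ) ≤ 2 * ((n:ℝ) + 1) * z by positivity),
          mul_pos hpos1 h2]
      have := (mul_le_mul_iff_of_pos_right (show (0:ℝ) < 2 * z by positivity)).mp h3
      linarith

theorem stmt_11 (t : ℝ) (ht0 : 0 < t) (ht1 : t < 1) (d : ℕ) :
    (1 - t) ^ 2 ≤ (1 - t ^ 2) * (legendre d ((1 + t ^ 2) / (1 - t ^ 2)) / legendre (d + 1) ((1 + t ^ 2) / (1 - t ^ 2))) ∧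
    (1 - t ^ 2) * (legendre d ((1 + t ^ 2) / (1 - t ^ 2)) / legendre (d + 1) ((1 + t ^ 2) / (1 - t ^ 2))) ≤ 1 + t ^ 2 := by
  have h1t : (0:ℝ) < 1 - t := by linarith
  have h1t2 : (0:ℝ) < 1 - t ^ 2 := by nlinarith
  set x := (1 + t ^ 2) / (1 - t ^ 2) with hx
  set z := (1 + t) / (1 - t) with hzdef
  have hz : 1 < z := by rw [hzdef, lt_div_iff₀ h1t]; linarith
  have hxz : 2 * x * z = z ^ 2 + 1 := by
    rw [hx, hzdef]; field_simp; ring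
  obtain ⟨hpos, hle, hzle⟩ := legendre_key x z hz hxz d
  have hpos1 : 0 < legendre (d + 1) x := lt_of_lt_of_le hpos hle
  constructor
  · rw [mul_div_assoc', le_div_iff₀ hpos1]
    have : (1 - t) * legendre (d + 1) x ≤ (1 + t) * legendre d x := by
      have := mul_le_mul_of_nonneg_left hzle h1t.le
      rw [hzdef] at this
      calc (1 - t) * legendre (d + 1) x ≤ (1 - t) * ((1 + t) / (1 - t) * legendre d x) := this
        _ = (1 + t) * legendre d x := by field_simp
    nlinarith
  · rw [mul_div_assoc', div_le_iff₀ hpos1]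
    nlinarith [mul_le_mul_of_nonneg_left hle h1t2.le]
end

section
/- Let d ≥ 2, 0 ≤ r ≤ 1, and define the density f(t;r,d) = (1/π)·√(A(t)M(t) − B(t)²)/M(t) where M, A, B are as in the correlated game setting. Then f(1/t; r, d) = t²·f(t; r, d) for all t > 0. Consequently, ∫₀^∞ f(t;r,d) dt = 2∫₀^1 f(t;r,d) dt. -/
noncomputable def Mfun (d : ℕ) (r t : ℝ) : ℝ :=
  (1 - r) * (∑ i ∈ Finset.range d, (Nat.choose (d - 1) i : ℝ) ^ 2 * t ^ (2 * i))
    + r * (1 + t) ^ (2 * (d - 1))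

noncomputable def Afun (d : ℕ) (r t : ℝ) : ℝ :=
  (1 - r) * (∑ i ∈ Finset.range d, (i : ℝ) ^ 2 * (Nat.choose (d - 1) i : ℝ) ^ 2 * t ^ (2 * (i - 1)))
    + r * ((d : ℝ) - 1) ^ 2 * (1 + t) ^ (2 * (d - 2))

noncomputable def Bfun (d : ℕ) (r t : ℝ) : ℝ :=
  (1 - r) * (∑ i ∈ Finset.range d, (i : ℝ) * (Nat.choose (d - 1) i : ℝ) ^ 2 * t ^ (2 * i - 1))
    + r * ((d : ℝ) - 1) * (1 + t) ^ (2 * d - 3)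

noncomputable def fdens (d : ℕ) (r t : ℝ) : ℝ :=
  (1 / Real.pi) * Real.sqrt (Afun d r t * Mfun d r t - Bfun d r t ^ 2) / Mfun d r t

set_option linter.unreachableTactic false
set_option linter.unusedTactic false

lemma E3' (m : ℕ) (t : ℝ) (ht : 0 < t) :
    ∑ i ∈ Finset.range (m+2), t^(2*m+2) * ((Nat.choose (m+1) i : ℝ)^2 * (1/t)^(2*i))
      = ∑ i ∈ Finset.range (m+2), (Nat.choose (m+1) i : ℝ)^2 * t^(2*i) := by
  rw [← Finset.sum_range_reflect (fun i => (Nat.choose (m+1) i : ℝ)^2 * t^(2*i)) (m+2)]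
  refine Finset.sum_congr rfl fun i hi => ?_
  simp only [Finset.mem_range] at hi
  have h : i ≤ m + 1 := by omega
  rw [show m+2-1-i = m+1-i by omega, Nat.choose_symm h]
  rw [one_div, inv_pow, show 2*m+2 = 2*(m+1-i)+2*i by omega, pow_add]
  field_simp
  all_goals ring

lemma E4' (m : ℕ) (t : ℝ) (ht : 0 < t) :
    ∑ i ∈ Finset.range (m+2), t^(2*m+1) * ((i:ℝ) * (Nat.choose (m+1) i : ℝ)^2 * (1/t)^(2*i-1))
      = ∑ i ∈ Finset.range (m+2),
          (((m:ℝ)+1) * ((Nat.choose (m+1) i : ℝ)^2 * t^(2*i))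
            - t * ((i:ℝ) * (Nat.choose (m+1) i : ℝ)^2 * t^(2*i-1))) := by
  have ht' : t ≠ 0 := ht.ne'
  rw [← Finset.sum_range_reflect
    (fun i => t^(2*m+1) * ((i:ℝ) * (Nat.choose (m+1) i : ℝ)^2 * (1/t)^(2*i-1))) (m+2)]
  refine Finset.sum_congr rfl fun i hi => ?_
  simp only [Finset.mem_range] at hi
  have h : i ≤ m + 1 := by omega
  rw [show m+2-1-i = m+1-i by omega, Nat.choose_symm h]
  simp only [one_div, inv_pow]
  have hc : ((m+1-i : ℕ) : ℝ) = (m:ℝ) + 1 - i := by push_cast [h]; ring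
  rw [hc]
  rcases Nat.eq_or_lt_of_le h with hi1 | hi1
  · -- i = m+1
    subst hi1
    rw [show 2*(m+1-(m+1))-1 = 0 by omega, show 2*(m+1)-1 = 2*m+1 by omega,
      show 2*(m+1) = (2*m+1)+1 by omega, pow_succ]
    push_cast
    field_simp
    all_goals ring
  · have h2 : i ≤ m := by omega
    rw [show 2*(m+1-i)-1 = 2*(m-i)+1 by omega]
    rcases Nat.eq_zero_or_pos i with hi0 | hi0
    · subst hi0
      rw [show 2*(m-0)+1 = 2*m+1 by omega]
      push_cast
      field_simp
      all_goals ring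
    · rw [show 2*i-1 = 2*(i-1)+1 by omega, show 2*i = 2*(i-1)+2 by omega,
        show 2*m+1 = (2*(m-i)+1)+(2*(i-1)+2) by omega, pow_add]
      field_simp
      all_goals ring

lemma E5' (m : ℕ) (t : ℝ) (ht : 0 < t) :
    ∑ i ∈ Finset.range (m+2), t^(2*m) * ((i:ℝ)^2 * (Nat.choose (m+1) i : ℝ)^2 * (1/t)^(2*(i-1)))
      = ∑ i ∈ Finset.range (m+2),
          (t^2 * ((i:ℝ)^2 * (Nat.choose (m+1) i : ℝ)^2 * t^(2*(i-1)))
            - 2*((m:ℝ)+1) * t * ((i:ℝ) * (Nat.choose (m+1) i : ℝ)^2 * t^(2*i-1))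
            + ((m:ℝ)+1)^2 * ((Nat.choose (m+1) i : ℝ)^2 * t^(2*i))) := by
  have ht' : t ≠ 0 := ht.ne'
  rw [← Finset.sum_range_reflect
    (fun i => t^(2*m) * ((i:ℝ)^2 * (Nat.choose (m+1) i : ℝ)^2 * (1/t)^(2*(i-1)))) (m+2)]
  refine Finset.sum_congr rfl fun i hi => ?_
  simp only [Finset.mem_range] at hi
  have h : i ≤ m + 1 := by omega
  rw [show m+2-1-i = m+1-i by omega, Nat.choose_symm h]
  simp only [one_div, inv_pow]
  have hc : ((m+1-i : ℕ) : ℝ) = (m:ℝ) + 1 - i := by push_cast [h]; ring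
  rw [hc]
  rcases Nat.eq_or_lt_of_le h with hi1 | hi1
  · subst hi1
    rw [show 2*((m+1-(m+1))-1) = 0 by omega, show 2*((m+1)-1) = 2*m by omega,
      show 2*(m+1)-1 = 2*m+1 by omega, show 2*(m+1) = 2*m+2 by omega]
    push_cast
    rw [show 2*m+1 = 2*m+1 from rfl, pow_succ t (2*m+1), pow_succ t (2*m)]
    field_simp
    all_goals ring
  · have h2 : i ≤ m := by omega
    rw [show 2*((m+1-i)-1) = 2*(m-i) by omega]
    rcases Nat.eq_zero_or_pos i with hi0 | hi0
    · subst hi0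
      rw [show 2*(m-0) = 2*m by omega]
      push_cast
      field_simp
      all_goals ring
    · rw [show 2*(i-1) = 2*(i-1) from rfl, show 2*i-1 = 2*(i-1)+1 by omega,
        show 2*i = 2*(i-1)+2 by omega,
        show 2*m = (2*(m-i))+(2*(i-1)+2) by omega, pow_add]
      field_simp
      all_goals ring

lemma PP' (k : ℕ) (t : ℝ) (ht : 0 < t) : t^k * (1 + 1/t)^k = (1+t)^k := by
  rw [← mul_pow]
  congr 1
  field_simp
  ring

lemma key1 (m : ℕ) (r t : ℝ) (ht : 0 < t) :
    t ^ (2*m+2) * Mfun (m+2) r (1/t) = Mfun (m+2) r t := by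
  unfold Mfun
  rw [show (m+2)-1 = m+1 by omega, show 2*(m+1) = 2*m+2 by omega]
  have h3 := E3' m t ht
  rw [← Finset.mul_sum] at h3
  have hp := PP' (2*m+2) t ht
  linear_combination (1-r) * h3 + r * hp

lemma key2 (m : ℕ) (r t : ℝ) (ht : 0 < t) :
    t ^ (2*m+1) * Bfun (m+2) r (1/t)
      = ((m:ℝ)+1) * Mfun (m+2) r t - t * Bfun (m+2) r t := by
  unfold Bfun Mfun
  rw [show (m+2)-1 = m+1 by omega, show 2*(m+2)-3 = 2*m+1 by omega,
    show 2*(m+1) = 2*m+2 by omega]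
  have h4 := E4' m t ht
  rw [← Finset.mul_sum, Finset.sum_sub_distrib, ← Finset.mul_sum, ← Finset.mul_sum] at h4
  have hp := PP' (2*m+1) t ht
  have hq : (1+t)^(2*m+2) = (1+t)^(2*m+1) * (1+t) := by rw [← pow_succ]
  push_cast
  linear_combination (1-r) * h4 + r * ((m:ℝ)+1) * hp + r * ((m:ℝ)+1) * hq

lemma key3 (m : ℕ) (r t : ℝ) (ht : 0 < t) :
    t ^ (2*m) * Afun (m+2) r (1/t)
      = t^2 * Afun (m+2) r t - 2*((m:ℝ)+1)*t*Bfun (m+2) r t + ((m:ℝ)+1)^2 * Mfun (m+2) r t := by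
  unfold Afun Bfun Mfun
  rw [show (m+2)-1 = m+1 by omega, show (m+2)-2 = m by omega,
    show 2*(m+2)-3 = 2*m+1 by omega, show 2*(m+1) = 2*m+2 by omega]
  have h5 := E5' m t ht
  rw [← Finset.mul_sum, Finset.sum_add_distrib, Finset.sum_sub_distrib,
    ← Finset.mul_sum, ← Finset.mul_sum, ← Finset.mul_sum] at h5
  have hp := PP' (2*m) t ht
  have hq1 : (1+t)^(2*m+1) = (1+t)^(2*m) * (1+t) := by rw [← pow_succ]
  have hq2 : (1+t)^(2*m+2) = (1+t)^(2*m) * (1+t)^2 := by rw [← pow_add]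
  push_cast
  linear_combination (1-r) * h5 + r * ((m:ℝ)+1)^2 * hp + 2*r*((m:ℝ)+1)^2*t * hq1
    + (- r) * ((m:ℝ)+1)^2 * hq2

lemma Mge1 (d : ℕ) (hd : 2 ≤ d) (r : ℝ) (hr0 : 0 ≤ r) (hr1 : r ≤ 1) (t : ℝ) (ht : 0 ≤ t) :
    1 ≤ Mfun d r t := by
  unfold Mfun
  have hS : 1 ≤ ∑ i ∈ Finset.range d, (Nat.choose (d-1) i : ℝ)^2 * t^(2*i) := by
    have h0 : (0:ℕ) ∈ Finset.range d := by simp; omega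
    calc (1:ℝ) = (Nat.choose (d-1) 0 : ℝ)^2 * t^(2*0) := by simp
      _ ≤ _ := Finset.single_le_sum (f := fun i => (Nat.choose (d-1) i : ℝ)^2 * t^(2*i))
            (fun i _ => by positivity) h0
  have hP : 1 ≤ (1+t)^(2*(d-1)) := one_le_pow₀ (by linarith)
  nlinarith [mul_nonneg (sub_nonneg.2 hr1) (sub_nonneg.2 hS), mul_nonneg hr0 (sub_nonneg.2 hP)]

lemma part1 (m : ℕ) (r : ℝ) (hr0 : 0 ≤ r) (hr1 : r ≤ 1) (t : ℝ) (ht : 0 < t) :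
    fdens (m+2) r (1/t) = t ^ 2 * fdens (m+2) r t := by
  have hM1 := Mge1 (m+2) (by omega) r hr0 hr1 t ht.le
  have hMpos : 0 < Mfun (m+2) r t := by linarith
  have hMne : Mfun (m+2) r t ≠ 0 := hMpos.ne'
  have ht' : t ≠ 0 := ht.ne'
  have hM' : Mfun (m+2) r (1/t) = Mfun (m+2) r t / t^(2*m+2) := by
    rw [eq_div_iff (by positivity)]
    linarith [key1 m r t ht]
  have hB' : Bfun (m+2) r (1/t)
      = (((m:ℝ)+1) * Mfun (m+2) r t - t * Bfun (m+2) r t) / t^(2*m+1) := by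
    rw [eq_div_iff (by positivity)]
    linarith [key2 m r t ht]
  have hA' : Afun (m+2) r (1/t)
      = (t^2 * Afun (m+2) r t - 2*((m:ℝ)+1)*t*Bfun (m+2) r t
          + ((m:ℝ)+1)^2 * Mfun (m+2) r t) / t^(2*m) := by
    rw [eq_div_iff (by positivity)]
    linarith [key3 m r t ht]
  have hu : Afun (m+2) r (1/t) * Mfun (m+2) r (1/t) - Bfun (m+2) r (1/t) ^ 2
      = ((t^(2*m))⁻¹)^2 * (Afun (m+2) r t * Mfun (m+2) r t - Bfun (m+2) r t ^ 2) := by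
    rw [hA', hB', hM']
    field_simp
    ring
  unfold fdens
  rw [hu, hM', Real.sqrt_mul (sq_nonneg _), Real.sqrt_sq (by positivity)]
  rw [div_div_eq_mul_div]
  field_simp
  ring

theorem stmt_14 (d : ℕ) (hd : 2 ≤ d) (r : ℝ) (hr0 : 0 ≤ r) (hr1 : r ≤ 1) :
    (∀ t : ℝ, 0 < t → fdens d r (1 / t) = t ^ 2 * fdens d r t) ∧
    (∫ t in Set.Ioi (0 : ℝ), fdens d r t) = 2 * ∫ t in Set.Ioc (0 : ℝ) 1, fdens d r t := by
  obtain ⟨m, rfl⟩ : ∃ m, d = m + 2 := ⟨d - 2, by omega⟩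
  refine ⟨fun t ht => part1 m r hr0 hr1 t ht, ?_⟩
  -- continuity
  have hcA : Continuous (fun t => Afun (m+2) r t) := by
    unfold Afun
    exact (continuous_const.mul (continuous_finset_sum _ fun i _ =>
      continuous_const.mul (continuous_pow _))).add
      (continuous_const.mul ((continuous_const.add continuous_id).pow _))
  have hcM : Continuous (fun t => Mfun (m+2) r t) := by
    unfold Mfun
    exact (continuous_const.mul (continuous_finset_sum _ fun i _ =>
      continuous_const.mul (continuous_pow _))).add
      (continuous_const.mul ((continuous_const.add continuous_id).pow _))
  have hcB : Continuous (fun t => Bfun (m+2) r t) := by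
    unfold Bfun
    exact (continuous_const.mul (continuous_finset_sum _ fun i _ =>
      continuous_const.mul (continuous_pow _))).add
      (continuous_const.mul ((continuous_const.add continuous_id).pow _))
  have hfc : ContinuousOn (fdens (m+2) r) (Set.Ici (0:ℝ)) := by
    unfold fdens
    apply ContinuousOn.div
    · exact (continuous_const.mul (Real.continuous_sqrt.comp
        ((hcA.mul hcM).sub (hcB.pow 2)))).continuousOn
    · exact hcM.continuousOn
    · intro x hx
      have := Mge1 (m+2) (by omega) r hr0 hr1 x hx
      intro h0
      rw [h0] at this
      linarith
  have hIoc : MeasureTheory.IntegrableOn (fdens (m+2) r) (Set.Ioc (0:ℝ) 1) := by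
    have : MeasureTheory.IntegrableOn (fdens (m+2) r) (Set.Icc (0:ℝ) 1) :=
      (hfc.mono (fun x hx => hx.1)).integrableOn_compact isCompact_Icc
    exact this.mono_set Set.Ioc_subset_Icc_self
  have himg : (fun x : ℝ => x⁻¹) '' Set.Ioo 0 1 = Set.Ioi 1 := by
    ext y
    simp only [Set.mem_image, Set.mem_Ioo, Set.mem_Ioi]
    constructor
    · rintro ⟨x, ⟨hx0, hx1⟩, rfl⟩
      exact (one_lt_inv₀ hx0).2 hx1
    · intro hy
      have hy0 : 0 < y := lt_trans one_pos hy
      exact ⟨y⁻¹, ⟨inv_pos.2 hy0, inv_lt_one_of_one_lt₀ hy⟩, inv_inv y⟩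
  have hderiv : ∀ x ∈ Set.Ioo (0:ℝ) 1,
      HasDerivWithinAt (fun y : ℝ => y⁻¹) (-(x^2)⁻¹) (Set.Ioo 0 1) x :=
    fun x hx => (hasDerivAt_inv hx.1.ne').hasDerivWithinAt
  have hinj : Set.InjOn (fun y : ℝ => y⁻¹) (Set.Ioo 0 1) :=
    fun a _ b _ h => inv_injective h
  have heq : ∀ x ∈ Set.Ioo (0:ℝ) 1,
      fdens (m+2) r x = |(-(x^2)⁻¹)| • fdens (m+2) r x⁻¹ := by
    intro x hx
    have hx0 := hx.1
    have h1 := part1 m r hr0 hr1 x hx0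
    rw [one_div] at h1
    rw [h1, smul_eq_mul, abs_neg, abs_inv, abs_of_pos (by positivity)]
    field_simp
  have hIoiInt : MeasureTheory.IntegrableOn (fdens (m+2) r) (Set.Ioi (1:ℝ)) := by
    rw [← himg,
      MeasureTheory.integrableOn_image_iff_integrableOn_abs_deriv_smul
        measurableSet_Ioo hderiv hinj]
    exact MeasureTheory.IntegrableOn.congr_fun
      (hIoc.mono_set Set.Ioo_subset_Ioc_self) heq measurableSet_Ioo
  have hIoi : (∫ x in Set.Ioi (1:ℝ), fdens (m+2) r x)
      = ∫ x in Set.Ioc (0:ℝ) 1, fdens (m+2) r x := by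
    rw [← himg,
      MeasureTheory.integral_image_eq_integral_abs_deriv_smul measurableSet_Ioo hderiv hinj,
      MeasureTheory.integral_Ioc_eq_integral_Ioo]
    exact (MeasureTheory.setIntegral_congr_fun measurableSet_Ioo heq).symm
  have hsplit : (∫ x in Set.Ioi (0:ℝ), fdens (m+2) r x)
      = (∫ x in Set.Ioc (0:ℝ) 1, fdens (m+2) r x) + ∫ x in Set.Ioi (1:ℝ), fdens (m+2) r x := by
    rw [← Set.Ioc_union_Ioi_eq_Ioi (zero_le_one (α := ℝ))]
    exact MeasureTheory.setIntegral_union (Set.Ioc_disjoint_Ioi le_rfl)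
      measurableSet_Ioi hIoc hIoiInt
  rw [hsplit, hIoi]
  ring
end

section
/- Let d ≥ 2 and for 0 < t < 1 set x = (1+t²)/(1−t²), M₁(t) = ∑_{i=0}^{d-1} C(d-1,i)² t^{2i}, B₁(t) = M₁'(t)/2. Then (t−1)·[B₁(t)(1+t) − M₁(t)(d−1)] ≥ 0. -/
theorem stmt_16 (d : ℕ) (hd : 2 ≤ d)
    (M₁ B₁ : ℝ → ℝ)
    (hM : M₁ = fun t => ∑ i ∈ Finset.range d, (Nat.choose (d - 1) i : ℝ) ^ 2 * t ^ (2 * i))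
    (hB : B₁ = fun t => deriv M₁ t / 2) :
    ∀ t : ℝ, 0 < t → t < 1 →
      (t - 1) * (B₁ t * (1 + t) - M₁ t * ((d : ℝ) - 1)) ≥ 0 := by
  intro t ht0 ht1
  set n : ℕ := d - 1 with hn
  have hn1 : 1 ≤ n := by omega
  have hdn : d = n + 1 := by omega
  set a : ℕ → ℝ := fun i => (Nat.choose n i : ℝ) with ha
  set b : ℕ → ℝ := fun i => (Nat.choose (n-1) i : ℝ) with hb
  have hbn : b n = 0 := by
    simp only [hb, Nat.choose_eq_zero_of_lt (show n - 1 < n by omega), Nat.cast_zero]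
  have hb0 : b 0 = 1 := by simp [hb]
  have pascal : ∀ j : ℕ, a (j+1) = b j + b (j+1) := by
    intro j
    have h := Nat.choose_succ_succ (n-1) j
    rw [Nat.succ_eq_add_one, Nat.sub_add_cancel hn1] at h
    simp only [ha, hb, h]; push_cast; ring
  have hmul : ∀ j : ℕ, a (j+1) * ((j:ℝ)+1) = (n : ℝ) * b j := by
    intro j
    have h := Nat.add_one_mul_choose_eq (n-1) j
    rw [Nat.sub_add_cancel hn1] at h
    have h2 := congrArg (fun x : ℕ => (x : ℝ)) h
    push_cast at h2
    simp only [ha, hb]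
    linarith [h2]
  set S1 : ℝ := ∑ i ∈ Finset.range (n+1), a i ^ 2 * t ^ (2*i) with hS1
  set P : ℝ := ∑ j ∈ Finset.range n, a (j+1) * b j * t ^ (2*j+1) with hP
  set G : ℝ := (∑ i ∈ Finset.range n, b i ^ 2 * t ^ (2*i))
      - ∑ i ∈ Finset.range n, b i * b (i+1) * t ^ (2*i+1) with hG
  have hM1 : M₁ t = S1 := by rw [hM, hdn]
  -- derivative
  have hderiv : deriv M₁ t = 2 * (n : ℝ) * P := by
    have hD : HasDerivAt M₁
        (∑ i ∈ Finset.range (n+1), a i ^ 2 * (((2*i : ℕ) : ℝ) * t ^ (2*i - 1))) t := by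
      rw [hM, hdn]
      exact HasDerivAt.fun_sum fun i _ => ((hasDerivAt_pow (2*i) t).const_mul _)
    rw [hD.deriv, Finset.sum_range_succ']
    have hterm : ∀ j ∈ Finset.range n,
        a (j+1) ^ 2 * (((2*(j+1) : ℕ) : ℝ) * t ^ (2*(j+1) - 1))
        = 2*(n:ℝ) * (a (j+1) * b j * t ^ (2*j+1)) := by
      intro j _
      rw [show 2*(j+1) - 1 = 2*j+1 from by omega]
      push_cast
      linear_combination (2 * a (j+1) * t ^ (2*j+1)) * hmul j
    rw [Finset.sum_congr rfl hterm, ← Finset.mul_sum, ← hP]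
    norm_num
  -- key identity
  have hkey : S1 - (1+t)*P = (1-t)*G := by
    have hS1' : S1 = (∑ j ∈ Finset.range n, a (j+1)^2 * t^(2*(j+1))) + 1 := by
      rw [hS1, Finset.sum_range_succ']
      norm_num [ha]
    have hF : (∑ i ∈ Finset.range n, b i ^2 * t^(2*i))
        = (∑ j ∈ Finset.range n, b (j+1)^2 * t^(2*(j+1))) + 1 := by
      have h1 := Finset.sum_range_succ (fun i => b i ^2 * t^(2*i)) n
      have h2 := Finset.sum_range_succ' (fun i => b i ^2 * t^(2*i)) n
      simp only [hbn, hb0] at h1 h2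
      norm_num at h1 h2
      rw [← h1, h2]
    have htel : ∑ j ∈ Finset.range n,
        (b (j+1)^2 * t^(2*(j+1)+1) - b j ^2 * t^(2*j+1))
        = b n ^2 * t^(2*n+1) - b 0 ^2 * t^(2*0+1) :=
      Finset.sum_range_sub (fun i => b i ^2 * t^(2*i+1)) n
    rw [hbn, hb0] at htel
    norm_num at htel
    have hcomb : ∀ j ∈ Finset.range n,
        (a (j+1)^2 * t^(2*(j+1)) - (1+t)*(a (j+1) * b j * t^(2*j+1))
          - (1-t)*(b (j+1)^2 * t^(2*(j+1))) + (1-t)*(b j * b (j+1) * t^(2*j+1)))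
        = (b (j+1)^2 * t^(2*(j+1)+1) - b j ^2 * t^(2*j+1)) := by
      intro j _
      rw [pascal j]
      ring
    have hsum := Finset.sum_congr rfl hcomb
    rw [Finset.sum_sub_distrib, htel] at hsum
    have hexp : ∑ j ∈ Finset.range n,
        (a (j+1)^2 * t^(2*(j+1)) - (1+t)*(a (j+1) * b j * t^(2*j+1))
          - (1-t)*(b (j+1)^2 * t^(2*(j+1))) + (1-t)*(b j * b (j+1) * t^(2*j+1)))
        = (∑ j ∈ Finset.range n, a (j+1)^2 * t^(2*(j+1)))
          - (1+t)*P - (1-t)*(∑ j ∈ Finset.range n, b (j+1)^2 * t^(2*(j+1)))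
          + (1-t)*(∑ j ∈ Finset.range n, b j * b (j+1) * t^(2*j+1)) := by
      rw [hP, Finset.sum_add_distrib, Finset.sum_sub_distrib, Finset.sum_sub_distrib,
        ← Finset.mul_sum, ← Finset.mul_sum, ← Finset.mul_sum]
    rw [hexp] at hsum
    rw [hS1', hG, hF]
    linear_combination hsum
  -- G ≥ 0
  have hGnn : 0 ≤ G := by
    rw [hG]
    have hub : ∀ i : ℕ, b i * b (i+1) * t^(2*i+1)
        = (b i * t^i) * (b (i+1) * t^(i+1)) := by
      intro i
      rw [show 2*i+1 = i + (i+1) from by omega, pow_add]; ring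
    have hsq : ∀ i : ℕ, b i ^2 * t^(2*i) = (b i * t^i)^2 := by
      intro i
      rw [show 2*i = i + i from by omega, pow_add]; ring
    simp only [hub, hsq]
    set u : ℕ → ℝ := fun i => b i * t^i with hu
    have hun : u n = 0 := by simp [hu, hbn]
    have hshift : (∑ j ∈ Finset.range n, u (j+1)^2) ≤ ∑ i ∈ Finset.range n, u i ^2 := by
      have h1 := Finset.sum_range_succ (fun i => u i ^2) n
      have h2 := Finset.sum_range_succ' (fun i => u i ^2) n
      simp only [hun] at h1
      nlinarith [sq_nonneg (u 0), h1, h2]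
    have hterm : ∀ i ∈ Finset.range n, u i * u (i+1) ≤ (u i ^2 + u (i+1)^2)/2 := by
      intro i _
      nlinarith [sq_nonneg (u i - u (i+1))]
    have hle := Finset.sum_le_sum hterm
    have hsplit : ∑ i ∈ Finset.range n, (u i ^2 + u (i+1)^2)/2
        = ((∑ i ∈ Finset.range n, u i ^2) + ∑ i ∈ Finset.range n, u (i+1)^2)/2 := by
      rw [← Finset.sum_add_distrib, ← Finset.sum_div]
    rw [hsplit] at hle
    linarith
  -- finish
  have hcast : (d : ℝ) - 1 = (n : ℝ) := by
    rw [hn, Nat.cast_sub (by omega : 1 ≤ d)]; norm_num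
  have hXle : B₁ t * (1 + t) - M₁ t * ((d : ℝ) - 1) ≤ 0 := by
    rw [hB, hM1, hcast]
    show deriv M₁ t / 2 * (1+t) - S1 * (n:ℝ) ≤ 0
    rw [hderiv]
    have heq : 2*(n:ℝ)*P/2*(1+t) - S1*(n:ℝ) = -((n:ℝ)*((1-t)*G)) := by
      linear_combination (-(n:ℝ)) * hkey
    rw [heq]
    have hprod : 0 ≤ (n:ℝ)*((1-t)*G) :=
      mul_nonneg (by positivity) (mul_nonneg (by linarith) hGnn)
    linarith
  nlinarith [hXle]
end

section
/- Let d ≥ 2 and for 0 < t < 1 define M₁(t) = ∑_{i=0}^{d-1} C(d-1,i)² t^{2i} and B₁(t) = M₁'(t)/2. Then (t²−1)·B₁(t) − (d−1)·t·M₁(t) ≤ 0. -/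
theorem stmt_17 (d : ℕ) (hd : 2 ≤ d)
    (M₁ B₁ : ℝ → ℝ)
    (hM : M₁ = fun t => ∑ i ∈ Finset.range d, (Nat.choose (d - 1) i : ℝ) ^ 2 * t ^ (2 * i))
    (hB : B₁ = fun t => deriv M₁ t / 2) :
    ∀ t : ℝ, 0 < t → t < 1 →
      (t ^ 2 - 1) * B₁ t - ((d : ℝ) - 1) * t * M₁ t ≤ 0 := by
  intro t ht0 ht1
  have hder : HasDerivAt M₁
      (∑ i ∈ Finset.range d, (Nat.choose (d - 1) i : ℝ) ^ 2 * (((2 * i : ℕ) : ℝ) * t ^ (2 * i - 1))) t := by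
    rw [hM]
    exact HasDerivAt.fun_sum fun i _ => (hasDerivAt_pow (2 * i) t).const_mul _
  have hderiv : deriv M₁ t
      = ∑ i ∈ Finset.range d, (Nat.choose (d - 1) i : ℝ) ^ 2 * (((2 * i : ℕ) : ℝ) * t ^ (2 * i - 1)) :=
    hder.deriv
  have hB0 : 0 ≤ B₁ t := by
    rw [hB]
    simp only [hderiv]
    apply div_nonneg _ (by norm_num)
    apply Finset.sum_nonneg
    intro i _
    positivity
  have hM0 : 0 ≤ M₁ t := by
    rw [hM]
    apply Finset.sum_nonneg
    intro i _
    positivity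
  have hd1 : (1:ℝ) ≤ (d:ℝ) := by exact_mod_cast Nat.one_le_of_lt hd
  nlinarith [mul_nonneg (mul_nonneg (sub_nonneg.mpr hd1) ht0.le) hM0,
    mul_nonneg (sub_nonneg.mpr (by nlinarith : t ^ 2 ≤ 1)) hB0]
end
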